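/- Molien's formula: for a finite group G acting linearly on a finite-dimensional complex vector space V, the Poincaré series ∑_{j≥0} dim ℂ[V]^G_j · t^j of the graded algebra of G-invariant polynomials equals (1/|G|) ∑_{g∈G} 1/det(1 - t·g). -/

import Mathlib

/-! Averaging over `G` is a projection of the degree-`j` homogeneous polynomials onto the
invariants, so `dim ℂ[V]^G_j` is the mean over `G` of the trace of `g` in degree `j`.
Each `ρ g` has finite order, hence is diagonalizable, say with eigenvalues `λᵢ`. In an
eigenbasis `g` scales the monomial `xᵉ` by `λᵉ`, so its trace in degree `j` is
`∑_{|e| = j} λᵉ`, the coefficient of `tʲ` in `∏ᵢ (1 - λᵢ t)⁻¹ = det (1 - t ρ g)⁻¹`. -/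

open MvPolynomial

/-- The linear action of `g ∈ G` (via `ρ : G →* GLₙ(ℂ)`) on polynomial functions on
`V = ℂⁿ`: `(g • f)(v) = f(g⁻¹ v)`, i.e. the substitution `xᵢ ↦ ∑ⱼ (ρ g)⁻¹ⱼᵢ xⱼ`. -/
noncomputable def polyAct {n : ℕ} {G : Type*} [Group G]
    (ρ : G →* Matrix.GeneralLinearGroup (Fin n) ℂ) (g : G) :
    MvPolynomial (Fin n) ℂ →ₐ[ℂ] MvPolynomial (Fin n) ℂ :=
  aeval fun i => ∑ j, (((ρ g)⁻¹ : Matrix.GeneralLinearGroup (Fin n) ℂ) : Matrix (Fin n) (Fin n) ℂ) j i • X j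

/-- The space `ℂ[V]^G_j` of `G`-invariant homogeneous polynomials of degree `j`. -/
noncomputable def invariantsDeg {n : ℕ} {G : Type*} [Group G]
    (ρ : G →* Matrix.GeneralLinearGroup (Fin n) ℂ) (j : ℕ) :
    Submodule ℂ (MvPolynomial (Fin n) ℂ) :=
  homogeneousSubmodule (Fin n) ℂ j ⊓
    ⨅ g : G, LinearMap.ker ((polyAct ρ g).toLinearMap - LinearMap.id)

open Finset

theorem LinearMap.toMatrix_eq_diagonal {R M ι : Type*} [CommRing R] [AddCommGroup M] [Module R M]
    [Fintype ι] [DecidableEq ι] (b : Module.Basis ι R M) {f : Module.End R M} {d : ι → R}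
    (hf : ∀ i, f (b i) = d i • b i) : LinearMap.toMatrix b b f = Matrix.diagonal d := by
  ext i i'
  rw [LinearMap.toMatrix_apply, hf, map_smul, Module.Basis.repr_self]
  rcases eq_or_ne i i' with rfl | h
  · simp
  · simp [h]

section Diagonalization

variable {K : Type*} [Field K]

theorem Module.End.isSemisimple_of_pow_eq_one {M : Type*} [AddCommGroup M] [Module K M]
    {f : Module.End K M} {k : ℕ} (hk : (k : K) ≠ 0) (hf : f ^ k = 1) : f.IsSemisimple :=
  isSemisimple_of_squarefree_aeval_eq_zero
    (Polynomial.X_pow_sub_one_separable_iff.2 hk).squarefree (by simp [hf])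

variable [IsAlgClosed K]

theorem Module.End.IsSemisimple.exists_basis_eigenvectors {M ι : Type*} [AddCommGroup M]
    [Module K M] [Finite ι] (b₀ : Module.Basis ι K M) {f : Module.End K M}
    (hf : f.IsSemisimple) :
    ∃ (b : Module.Basis ι K M) (d : ι → K), ∀ i, f (b i) = d i • b i := by
  classical
  have : FiniteDimensional K M := .of_basis b₀
  have hint := DirectSum.isInternal_submodule_of_iSupIndep_of_iSup_eq_top
    f.eigenspaces_iSupIndep hf.iSup_eigenspace_eq_top
  let v := hint.collectedBasis fun μ ↦ Module.finBasis K (f.eigenspace μ)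
  let e := v.indexEquiv b₀
  refine ⟨v.reindex e, fun i => (e.symm i).1, fun i => ?_⟩
  rw [Module.Basis.reindex_apply]
  exact mem_eigenspace_iff.mp (hint.collectedBasis_mem _ _)

theorem Matrix.exists_units_conj_diagonal_of_pow_eq_one {σ : Type*} [Fintype σ] [DecidableEq σ]
    {A : Matrix σ σ K} {k : ℕ} (hk : (k : K) ≠ 0) (hA : A ^ k = 1) :
    ∃ (P : (Matrix σ σ K)ˣ) (d : σ → K), A = P * diagonal d * P⁻¹ := by
  have hss : Module.End.IsSemisimple (toLin' A) :=
    Module.End.isSemisimple_of_pow_eq_one hk (by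
      change toLinAlgEquiv' A ^ k = 1
      rw [← map_pow, hA, map_one])
  let e := Pi.basisFun K σ
  obtain ⟨b, d, hb⟩ := hss.exists_basis_eigenvectors e
  refine ⟨⟨e.toMatrix b, b.toMatrix e, e.toMatrix_mul_toMatrix_flip b,
    b.toMatrix_mul_toMatrix_flip e⟩, d, ?_⟩
  rw [Units.val_mk, Units.inv_mk, ← LinearMap.toMatrix_eq_diagonal b hb,
    basis_toMatrix_mul_linearMap_toMatrix_mul_basis_toMatrix, LinearMap.toMatrix_eq_toMatrix',
    LinearMap.toMatrix'_toLin']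

end Diagonalization

section CharpolyRev

variable {σ R : Type*} [Fintype σ] [DecidableEq σ] [CommRing R]

theorem Matrix.charpolyRev_diagonal (d : σ → R) :
    (Matrix.diagonal d).charpolyRev = ∏ i, (1 - Polynomial.C (d i) * Polynomial.X) := by
  rw [charpolyRev, diagonal_map (map_zero _), smul_eq_diagonal_mul, diagonal_mul_diagonal,
    ← diagonal_one, diagonal_sub, det_diagonal]
  simp only [Polynomial.X_mul_C]

theorem Matrix.charpolyRev_units_conj (P : (Matrix σ σ R)ˣ) (A : Matrix σ σ R) :
    (P * A * P⁻¹ : Matrix σ σ R).charpolyRev = A.charpolyRev := by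
  rw [← reverse_charpoly, coe_units_inv, charpoly_units_conj, reverse_charpoly]

end CharpolyRev

namespace PowerSeries

theorem mk_pow_mul_one_sub_C_mul_X {R : Type*} [CommRing R] (a : R) :
    (mk fun k => a ^ k) * (1 - C a * X) = 1 := by
  simpa [rescale_mk, rescale_X] using congrArg (rescale a) (mk_one_mul_one_sub_eq_one R)

theorem coeff_inv_prod_one_sub_C_mul_X {K ι : Type*} [Field K] [Fintype ι] [DecidableEq ι]
    (d : ι → K) (j : ℕ) :
    coeff j (∏ i, (1 - C (d i) * X))⁻¹ = ∑ e ∈ finsuppAntidiag univ j, ∏ i, d i ^ e i := by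
  have hinv : (∏ i, (1 - C (d i) * X))⁻¹ = ∏ i, mk fun k => d i ^ k := by
    rw [inv_eq_iff_mul_eq_one (by simp [map_prod]), ← prod_mul_distrib]
    exact prod_eq_one fun i _ => mk_pow_mul_one_sub_C_mul_X (d i)
  simp [hinv, coeff_prod]

end PowerSeries

namespace MvPolynomial

variable {σ R : Type*} [Fintype σ] [CommRing R]

noncomputable def linearSubst (M : Matrix σ σ R) : MvPolynomial σ R →ₐ[R] MvPolynomial σ R :=
  aeval fun i => ∑ j, M j i • X j

theorem linearSubst_mul (M N : Matrix σ σ R) :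
    linearSubst (M * N) = (linearSubst M).comp (linearSubst N) := by
  ext i : 1
  simp only [linearSubst, AlgHom.comp_apply, aeval_X, map_sum, map_smul, Matrix.mul_apply,
    sum_smul, smul_sum, smul_smul]
  rw [sum_comm]
  simp_rw [mul_comm]

theorem linearSubst_one [DecidableEq σ] : linearSubst (1 : Matrix σ σ R) = AlgHom.id R _ := by
  ext i : 1
  simp [linearSubst, Matrix.one_apply, ite_smul]

theorem IsHomogeneous.linearSubst {p : MvPolynomial σ R} {j : ℕ} (hp : p.IsHomogeneous j)
    (M : Matrix σ σ R) : (linearSubst M p).IsHomogeneous j := by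
  have hX : ∀ i, (∑ k, M k i • X k : MvPolynomial σ R).IsHomogeneous 1 := fun i =>
    IsHomogeneous.sum _ _ _ fun k _ => by
      rw [smul_eq_C_mul]; exact isHomogeneous_C_mul_X (M k i) k
  have h := hp.aeval _ hX
  rwa [one_mul] at h

variable [DecidableEq σ]

theorem linearSubst_diagonal_monomial (d : σ → R) (e : σ →₀ ℕ) :
    linearSubst (Matrix.diagonal d) (monomial e 1) = (∏ i, d i ^ e i) • monomial e 1 := by
  have hX : ∀ i, linearSubst (Matrix.diagonal d) (X i) = C (d i) * X i := by
    intro i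
    simp [linearSubst, Matrix.diagonal_apply, smul_eq_C_mul]
  simp [monomial_eq, Finsupp.prod_fintype, map_prod, hX, mul_pow, prod_mul_distrib, smul_eq_C_mul]

noncomputable def linearSubstHom (j : ℕ) :
    Matrix σ σ R →* Module.End R (homogeneousSubmodule σ R j) where
  toFun M := (linearSubst M).toLinearMap.restrict fun _ hp => hp.linearSubst M
  map_one' := by ext; simp [linearSubst_one]
  map_mul' M N := by ext; simp [linearSubst_mul]; rfl

@[simp]
theorem coe_linearSubstHom_apply (j : ℕ) (M : Matrix σ σ R) (p : homogeneousSubmodule σ R j) :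
    (linearSubstHom j M p : MvPolynomial σ R) = linearSubst M p :=
  rfl

-- Indexing by `finsuppAntidiag univ j` rather than `{e | e.degree = j}` matches the sums
-- produced by `PowerSeries.coeff_prod`.
variable (σ R) in
noncomputable def homogeneousBasis (j : ℕ) :
    Module.Basis (finsuppAntidiag (univ : Finset σ) j) R (homogeneousSubmodule σ R j) :=
  (basisRestrictSupport R _).map <| LinearEquiv.ofEq _ _ <| by
    rw [homogeneousSubmodule_eq_finsupp_supported]
    congr
    ext e
    simp [mem_finsuppAntidiag, Finsupp.degree_eq_sum]

@[simp]
theorem coe_homogeneousBasis (j : ℕ) (e : finsuppAntidiag (univ : Finset σ) j) :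
    (homogeneousBasis σ R j e : MvPolynomial σ R) = monomial e 1 := by
  have hmem : monomial (e : σ →₀ ℕ) (1 : R) ∈ homogeneousSubmodule σ R j :=
    isHomogeneous_monomial _ <| by rw [Finsupp.degree_eq_sum]; exact (mem_finsuppAntidiag.mp e.2).1
  suffices homogeneousBasis σ R j e = ⟨_, hmem⟩ from congrArg Subtype.val this
  rw [Module.Basis.apply_eq_iff]
  ext e'
  change coeff (e' : σ →₀ ℕ) (monomial (e : σ →₀ ℕ) (1 : R)) = _
  rw [coeff_monomial, Finsupp.single_apply]
  exact if_congr Subtype.ext_iff.symm rfl rfl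

instance (j : ℕ) : Module.Finite R (homogeneousSubmodule σ R j) :=
  .of_basis (homogeneousBasis σ R j)

theorem trace_linearSubstHom_diagonal (j : ℕ) (d : σ → R) :
    LinearMap.trace R _ (linearSubstHom j (Matrix.diagonal d))
      = ∑ e ∈ finsuppAntidiag univ j, ∏ i, d i ^ e i := by
  have hb (e : finsuppAntidiag (univ : Finset σ) j) :
      linearSubstHom j (Matrix.diagonal d) (homogeneousBasis σ R j e)
        = (∏ i, d i ^ e.1 i) • homogeneousBasis σ R j e :=
    Subtype.ext <| by simpa using linearSubst_diagonal_monomial d e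
  rw [LinearMap.trace_eq_matrix_trace R (homogeneousBasis σ R j),
    LinearMap.toMatrix_eq_diagonal _ hb, Matrix.trace_diagonal,
    sum_coe_sort (finsuppAntidiag univ j) (fun e => ∏ i, d i ^ e i)]

theorem trace_linearSubstHom_eq_coeff_inv_charpolyRev {K : Type*} [Field K] [IsAlgClosed K]
    (j : ℕ) {A : Matrix σ σ K} {k : ℕ} (hk : (k : K) ≠ 0) (hA : A ^ k = 1) :
    LinearMap.trace K _ (linearSubstHom j A)
      = PowerSeries.coeff j (A.charpolyRev : PowerSeries K)⁻¹ := by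
  obtain ⟨P, d, rfl⟩ := Matrix.exists_units_conj_diagonal_of_pow_eq_one hk hA
  have hcoe : ((∏ i, (1 - Polynomial.C (d i) * Polynomial.X) : Polynomial K) : PowerSeries K)
      = ∏ i, (1 - PowerSeries.C (d i) * PowerSeries.X) := by
    rw [← Polynomial.coeToPowerSeries.ringHom_apply, map_prod]
    simp
  rw [Matrix.charpolyRev_units_conj, Matrix.charpolyRev_diagonal, hcoe,
    PowerSeries.coeff_inv_prod_one_sub_C_mul_X, map_mul (linearSubstHom j),
    map_mul (linearSubstHom j), ← Units.coe_map,
    ← Units.coe_map_inv, LinearMap.trace_conj, trace_linearSubstHom_diagonal]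

-- Substituting by `ρ g` rather than by `ρ g⁻¹` as `polyAct` does makes this a left action;
-- both have the same invariants.
noncomputable def homogeneousRep {G : Type*} [Group G] (ρ : G →* (Matrix σ σ R)ˣ) (j : ℕ) :
    Representation R G (homogeneousSubmodule σ R j) :=
  (linearSubstHom j).comp ((Units.coeHom _).comp ρ)

@[simp]
theorem homogeneousRep_apply {G : Type*} [Group G] (ρ : G →* (Matrix σ σ R)ˣ) (j : ℕ) (g : G) :
    homogeneousRep ρ j g = linearSubstHom j (ρ g : Matrix σ σ R) :=
  rfl

end MvPolynomial

section Molien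

variable {n : ℕ} {G : Type*} [Group G]

theorem polyAct_eq_linearSubst (ρ : G →* Matrix.GeneralLinearGroup (Fin n) ℂ) (g : G) :
    polyAct ρ g = linearSubst (ρ g⁻¹ : Matrix (Fin n) (Fin n) ℂ) := by
  rw [map_inv]
  rfl

theorem invariantsDeg_eq_map_invariants (ρ : G →* Matrix.GeneralLinearGroup (Fin n) ℂ) (j : ℕ) :
    invariantsDeg ρ j
      = (homogeneousRep ρ j).invariants.map (homogeneousSubmodule (Fin n) ℂ j).subtype := by
  ext p
  simp only [invariantsDeg, Submodule.mem_inf, Submodule.mem_iInf, LinearMap.mem_ker,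
    LinearMap.sub_apply, LinearMap.id_apply, sub_eq_zero, AlgHom.toLinearMap_apply,
    polyAct_eq_linearSubst, Submodule.mem_map, Representation.mem_invariants,
    Submodule.subtype_apply]
  constructor
  · rintro ⟨hp, hinv⟩
    refine ⟨⟨p, hp⟩, fun g => Subtype.ext ?_, rfl⟩
    simpa using hinv g⁻¹
  · rintro ⟨q, hq, rfl⟩
    exact ⟨q.2, fun g => congrArg Subtype.val (hq g⁻¹)⟩

theorem finrank_invariantsDeg (ρ : G →* Matrix.GeneralLinearGroup (Fin n) ℂ) (j : ℕ) :
    Module.finrank ℂ (invariantsDeg ρ j) = Module.finrank ℂ (homogeneousRep ρ j).invariants := by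
  rw [invariantsDeg_eq_map_invariants, Submodule.finrank_map_subtype_eq]

end Molien

/-- Molien's formula: for a finite group `G` acting linearly on `V = ℂⁿ` via
`ρ : G →* GLₙ(ℂ)`, the Poincaré series `∑ⱼ dim ℂ[V]^G_j · tʲ` of the invariant ring
equals `(1/|G|) ∑_{g ∈ G} 1 / det(1 - t·g)`, as formal power series in `t`. -/
theorem stmt17 {n : ℕ} {G : Type*} [Group G] [Fintype G]
    (ρ : G →* Matrix.GeneralLinearGroup (Fin n) ℂ) :
    (PowerSeries.mk fun j => (Module.finrank ℂ (invariantsDeg ρ j) : ℂ))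
      = (Fintype.card G : ℂ)⁻¹ •
          ∑ g : G,
            (↑(Matrix.det
                ((1 : Matrix (Fin n) (Fin n) (Polynomial ℂ)) - (Polynomial.X : Polynomial ℂ) •
                  ((ρ g : Matrix (Fin n) (Fin n) ℂ)).map Polynomial.C))
              : PowerSeries ℂ)⁻¹ := by
  have : Invertible (Nat.card G : ℂ) := invertibleOfNonzero (by simp)
  ext j
  rw [PowerSeries.coeff_mk, finrank_invariantsDeg, ← Representation.card_inv_mul_sum_char_eq_finrank,
    Nat.card_eq_fintype_card, map_smul, map_sum, smul_eq_mul]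
  congr 1
  refine Finset.sum_congr rfl fun g _ => ?_
  have hg : (ρ g : Matrix (Fin n) (Fin n) ℂ) ^ Fintype.card G = 1 := by
    rw [← Units.val_pow_eq_pow_val, ← map_pow, pow_card_eq_one, map_one, Units.val_one]
  exact trace_linearSubstHom_eq_coeff_inv_charpolyRev j (by simp) hg
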